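/- arXiv:1903.08232 — 2 statements merged into one kernel-verified Lean document; each statement's English description precedes it below -/
import Mathlib

section
/- For every $n$, $e$, $r$, $s$, among all $r$-uniform hypergraphs on $n$ vertices with $e$ edges maximizing the number of $s$-independent sets, there is one that is shifted (i.e., invariant under all $(i,j)$-shifts with $j < i$). -/
/-- The `(i,j)`-shift of a single edge: replace `i` by `j` when `E ∩ {i,j} = {i}`. -/
def shiftEdge (i j : ℕ) (E : Finset ℕ) : Finset ℕ :=
  if i ∈ E ∧ j ∉ E then insert j (E.erase i) else E

/-- The `(i,j)`-shift of an edge set. -/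
def shiftSet (i j : ℕ) (H : Finset (Finset ℕ)) : Finset (Finset ℕ) :=
  H.image (shiftEdge i j) ∪ H.filter (fun E => shiftEdge i j E ∈ H)

/-- The number of `s`-independent sets of a hypergraph on `[n] = {0,…,n-1}`. -/
def indepCount (n s : ℕ) (H : Finset (Finset ℕ)) : ℕ :=
  ((Finset.range n).powerset.filter (fun I => ∀ E ∈ H, (I ∩ E).card < s)).card

/-!
Among the hypergraphs maximizing the number of `s`-independent sets, take one of least total
weight `∑_{E ∈ H} ∑_{x ∈ E} x`. An `(i,j)`-shift with `j < i` keeps `H` an `r`-uniform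
hypergraph on `[n]` with `e` edges, and strictly lowers the weight unless it fixes `H`. It also
does not decrease the number of `s`-independent sets: applying the reverse `(j,i)`-shift to the
family of independent sets of `H` gives an equally large family of independent sets of the
shifted hypergraph. Hence the chosen maximizer is fixed by every shift.
-/

open Finset

section Shift

variable {i j : ℕ} {E : Finset ℕ} {H : Finset (Finset ℕ)}

lemma shiftEdge_of_mem_of_notMem (hi : i ∈ E) (hj : j ∉ E) :
    shiftEdge i j E = insert j (E.erase i) :=
  if_pos ⟨hi, hj⟩

lemma shiftEdge_eq_self (h : ¬(i ∈ E ∧ j ∉ E)) : shiftEdge i j E = E :=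
  if_neg h

lemma shiftEdge_shiftEdge (hi : i ∈ E) (hj : j ∉ E) :
    shiftEdge j i (shiftEdge i j E) = E := by
  have hij : i ≠ j := ne_of_mem_of_not_mem hi hj
  rw [shiftEdge_of_mem_of_notMem hi hj, shiftEdge_of_mem_of_notMem (mem_insert_self j _)
    (by simp [hij]), erase_insert (fun h => hj (mem_of_mem_erase h)), insert_erase hi]

lemma shiftEdge_idem : shiftEdge i j (shiftEdge i j E) = shiftEdge i j E := by
  by_cases h : i ∈ E ∧ j ∉ E
  · exact shiftEdge_eq_self (by simp [shiftEdge_of_mem_of_notMem h.1 h.2])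
  · rw [shiftEdge_eq_self h, shiftEdge_eq_self h]

lemma card_shiftEdge : (shiftEdge i j E).card = E.card := by
  by_cases h : i ∈ E ∧ j ∉ E
  · rw [shiftEdge_of_mem_of_notMem h.1 h.2,
      card_insert_of_notMem (fun h' => h.2 (mem_of_mem_erase h')), card_erase_add_one h.1]
  · rw [shiftEdge_eq_self h]

lemma shiftEdge_subset_insert : shiftEdge i j E ⊆ insert j E := by
  unfold shiftEdge
  split_ifs
  · exact insert_subset_insert j (erase_subset i E)
  · exact subset_insert j E

lemma shiftEdge_mem_powerset {A : Finset ℕ} (hj : j ∈ A) (hE : E ∈ A.powerset) :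
    shiftEdge i j E ∈ A.powerset :=
  mem_powerset.mpr (shiftEdge_subset_insert.trans (insert_subset hj (mem_powerset.mp hE)))

lemma shiftEdge_mem_powersetCard {A : Finset ℕ} {r : ℕ} (hj : j ∈ A)
    (hE : E ∈ A.powersetCard r) : shiftEdge i j E ∈ A.powersetCard r := by
  rw [mem_powersetCard] at hE ⊢
  exact ⟨mem_powerset.mp (shiftEdge_mem_powerset hj (mem_powerset.mpr hE.1)),
    card_shiftEdge.trans hE.2⟩

lemma mem_shiftSet :
    E ∈ shiftSet i j H ↔ (∃ E' ∈ H, shiftEdge i j E' = E) ∨ (E ∈ H ∧ shiftEdge i j E ∈ H) := by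
  simp [shiftSet]

lemma shiftSet_subset {𝒜 : Finset (Finset ℕ)} (hH : H ⊆ 𝒜)
    (h𝒜 : ∀ E ∈ 𝒜, shiftEdge i j E ∈ 𝒜) : shiftSet i j H ⊆ 𝒜 := by
  intro E hE
  rcases mem_shiftSet.mp hE with ⟨E', hE', rfl⟩ | ⟨hE, -⟩
  exacts [h𝒜 E' (hH hE'), hH hE]

lemma shiftSet_eq_self_iff : shiftSet i j H = H ↔ ∀ E ∈ H, shiftEdge i j E ∈ H := by
  refine ⟨fun h E hE => ?_, fun h => ?_⟩
  · rw [← h]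
    exact mem_shiftSet.mpr (Or.inl ⟨E, h ▸ hE, rfl⟩)
  · rw [shiftSet, filter_true_of_mem h, union_eq_right]
    exact image_subset_iff.mpr h

lemma shiftSet_eq_filter_union_image : shiftSet i j H =
    H.filter (fun E => shiftEdge i j E ∈ H) ∪
      (H.filter (fun E => shiftEdge i j E ∉ H)).image (shiftEdge i j) := by
  ext E
  simp only [mem_shiftSet, mem_union, mem_filter, mem_image]
  constructor
  · rintro (⟨E', hE', rfl⟩ | h)
    · by_cases hE'' : shiftEdge i j E' ∈ H
      · exact Or.inl ⟨hE'', by rwa [shiftEdge_idem]⟩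
      · exact Or.inr ⟨E', ⟨hE', hE''⟩, rfl⟩
    · exact Or.inl h
  · rintro (h | ⟨E', ⟨hE', -⟩, rfl⟩)
    exacts [Or.inr h, Or.inl ⟨E', hE', rfl⟩]

lemma moved_of_shiftEdge_notMem (hE : E ∈ H) (h : shiftEdge i j E ∉ H) : i ∈ E ∧ j ∉ E := by
  by_contra hc
  exact h (by rwa [shiftEdge_eq_self hc])

lemma injOn_shiftEdge_filter_notMem :
    Set.InjOn (shiftEdge i j) (H.filter fun E => shiftEdge i j E ∉ H) := by
  refine Set.LeftInvOn.injOn (f₁' := shiftEdge j i) fun E hE => ?_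
  obtain ⟨hE, hout⟩ := mem_filter.mp hE
  obtain ⟨hi, hj⟩ := moved_of_shiftEdge_notMem hE hout
  exact shiftEdge_shiftEdge hi hj

lemma disjoint_filter_mem_image_filter_notMem :
    Disjoint (H.filter fun E => shiftEdge i j E ∈ H)
      ((H.filter fun E => shiftEdge i j E ∉ H).image (shiftEdge i j)) := by
  simp only [disjoint_left, mem_filter, mem_image]
  rintro _ ⟨hE, -⟩ ⟨E', ⟨-, hE'⟩, rfl⟩
  exact hE' hE

lemma card_shiftSet : (shiftSet i j H).card = H.card := by
  rw [shiftSet_eq_filter_union_image,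
    card_union_of_disjoint disjoint_filter_mem_image_filter_notMem,
    card_image_of_injOn injOn_shiftEdge_filter_notMem, card_filter_add_card_filter_not]

end Shift

section Weight

variable {i j : ℕ} {E : Finset ℕ} {H : Finset (Finset ℕ)}

def totalWeight (H : Finset (Finset ℕ)) : ℕ := ∑ E ∈ H, ∑ x ∈ E, x

lemma sum_shiftEdge_add (hi : i ∈ E) (hj : j ∉ E) :
    (∑ x ∈ shiftEdge i j E, x) + i = (∑ x ∈ E, x) + j := by
  rw [shiftEdge_of_mem_of_notMem hi hj, sum_insert (fun h => hj (mem_of_mem_erase h)),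
    ← sum_erase_add E _ hi]
  ring

lemma totalWeight_shiftSet_lt (hji : j < i) (h : shiftSet i j H ≠ H) :
    totalWeight (shiftSet i j H) < totalWeight H := by
  obtain ⟨E, hE, hEout⟩ : ∃ E ∈ H, shiftEdge i j E ∉ H := by
    simpa [shiftSet_eq_self_iff] using h
  rw [totalWeight, shiftSet_eq_filter_union_image,
    sum_union disjoint_filter_mem_image_filter_notMem, sum_image injOn_shiftEdge_filter_notMem,
    totalWeight,
    ← sum_filter_add_sum_filter_not H (fun E => shiftEdge i j E ∈ H)]
  refine Nat.add_lt_add_left (sum_lt_sum_of_nonempty ⟨E, mem_filter.mpr ⟨hE, hEout⟩⟩ ?_) _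
  intro E hE
  obtain ⟨hi, hj⟩ := moved_of_shiftEdge_notMem (mem_filter.mp hE).1 (mem_filter.mp hE).2
  have := sum_shiftEdge_add (j := j) hi hj
  omega

end Weight

lemma Finset.card_inter_insert_erase_add {α : Type*} [DecidableEq α] {a b : α} {s t : Finset α}
    (ha : a ∈ t) (hb : b ∉ t) :
    (s ∩ insert b (t.erase a)).card + (if a ∈ s then 1 else 0) =
      (s ∩ t).card + (if b ∈ s then 1 else 0) := by
  have herase : (s ∩ t.erase a).card + (if a ∈ s then 1 else 0) = (s ∩ t).card := by
    rw [inter_erase]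
    split_ifs with has
    · exact card_erase_add_one (mem_inter.mpr ⟨has, ha⟩)
    · rw [erase_eq_of_notMem (fun h => has (mem_inter.mp h).1), add_zero]
  have hinsert : (s ∩ insert b (t.erase a)).card =
      (s ∩ t.erase a).card + (if b ∈ s then 1 else 0) := by
    split_ifs with hbs
    · rw [inter_insert_of_mem hbs,
        card_insert_of_notMem fun h => hb (mem_of_mem_erase (mem_inter.mp h).2)]
    · rw [inter_insert_of_notMem hbs, add_zero]
  omega

section Independence

variable {i j s : ℕ} {E I : Finset ℕ} {H F : Finset (Finset ℕ)}

lemma card_inter_shiftEdge_le_max :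
    (I ∩ shiftEdge i j E).card ≤ max (I ∩ E).card (shiftEdge j i I ∩ E).card := by
  by_cases hE : i ∈ E ∧ j ∉ E
  · have hcount := card_inter_insert_erase_add (s := I) hE.1 hE.2
    rw [shiftEdge_of_mem_of_notMem hE.1 hE.2]
    by_cases hI : j ∈ I ∧ i ∉ I
    · have hcount' := card_inter_insert_erase_add (s := E) hI.1 hI.2
      rw [shiftEdge_of_mem_of_notMem hI.1 hI.2]
      simp only [inter_comm E, hE, hI, if_true, if_false] at hcount hcount'
      omega
    · split_ifs at hcount <;> grind
  · rw [shiftEdge_eq_self hE]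
    exact le_max_left _ _

lemma card_shiftEdge_inter_shiftEdge_le :
    (shiftEdge j i I ∩ shiftEdge i j E).card ≤ (I ∩ E).card := by
  by_cases hE : i ∈ E ∧ j ∉ E <;> by_cases hI : j ∈ I ∧ i ∉ I
  · have hcount := card_inter_insert_erase_add (s := insert i (I.erase j)) hE.1 hE.2
    have hcount' := card_inter_insert_erase_add (s := E) hI.1 hI.2
    rw [shiftEdge_of_mem_of_notMem hE.1 hE.2, shiftEdge_of_mem_of_notMem hI.1 hI.2]
    have hjI' : j ∉ insert i (I.erase j) := by simp [(ne_of_mem_of_not_mem hE.1 hE.2).symm]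
    rw [if_pos (mem_insert_self _ _), if_neg hjI'] at hcount
    rw [if_pos hE.1, if_neg hE.2, inter_comm E, inter_comm E] at hcount'
    omega
  · have hcount := card_inter_insert_erase_add (s := I) hE.1 hE.2
    rw [shiftEdge_of_mem_of_notMem hE.1 hE.2, shiftEdge_eq_self hI]
    split_ifs at hcount <;> grind
  · have hcount := card_inter_insert_erase_add (s := E) hI.1 hI.2
    rw [shiftEdge_eq_self hE, shiftEdge_of_mem_of_notMem hI.1 hI.2]
    rw [inter_comm E, inter_comm E] at hcount
    split_ifs at hcount <;> grind
  · rw [shiftEdge_eq_self hE, shiftEdge_eq_self hI]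

lemma card_shiftEdge_inter_le_max :
    (shiftEdge j i I ∩ E).card ≤ max (I ∩ E).card (I ∩ shiftEdge i j E).card := by
  simpa only [inter_comm] using card_inter_shiftEdge_le_max (I := E) (E := I) (i := j) (j := i)

lemma card_inter_lt_of_mem_shiftSet (hFH : ∀ I ∈ F, ∀ E ∈ H, (I ∩ E).card < s)
    (hI : I ∈ shiftSet j i F) (hE : E ∈ shiftSet i j H) : (I ∩ E).card < s := by
  rcases mem_shiftSet.mp hI with ⟨J, hJ, rfl⟩ | ⟨hIF, hσI⟩ <;>
    rcases mem_shiftSet.mp hE with ⟨D, hD, rfl⟩ | ⟨hEH, hτE⟩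
  · exact card_shiftEdge_inter_shiftEdge_le.trans_lt (hFH J hJ D hD)
  · exact card_shiftEdge_inter_le_max.trans_lt (max_lt (hFH J hJ E hEH) (hFH J hJ _ hτE))
  · exact card_inter_shiftEdge_le_max.trans_lt (max_lt (hFH I hIF D hD) (hFH _ hσI D hD))
  · exact hFH I hIF E hEH

def indepSets (n s : ℕ) (H : Finset (Finset ℕ)) : Finset (Finset ℕ) :=
  (range n).powerset.filter fun I => ∀ E ∈ H, (I ∩ E).card < s

lemma shiftSet_indepSets_subset {n : ℕ} (hi : i < n) :
    shiftSet j i (indepSets n s H) ⊆ indepSets n s (shiftSet i j H) := by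
  intro I hI
  refine mem_filter.mpr ⟨?_, fun E hE => ?_⟩
  · exact shiftSet_subset (filter_subset _ _)
      (fun E hE => shiftEdge_mem_powerset (mem_range.mpr hi) hE) hI
  · exact card_inter_lt_of_mem_shiftSet (fun I hI => (mem_filter.mp hI).2) hI hE

lemma indepCount_le_indepCount_shiftSet {n : ℕ} (hi : i < n) :
    indepCount n s H ≤ indepCount n s (shiftSet i j H) :=
  calc indepCount n s H = (shiftSet j i (indepSets n s H)).card := card_shiftSet.symm
    _ ≤ indepCount n s (shiftSet i j H) := card_le_card (shiftSet_indepSets_subset hi)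

end Independence

theorem Finset.exists_max_image_of_descent {α β γ : Type*} [LinearOrder β] [LinearOrder γ]
    {S : Finset α} (hS : S.Nonempty) (f : α → β) (w : α → γ) {P : α → Prop}
    (h : ∀ x ∈ S, ¬P x → ∃ y ∈ S, f x ≤ f y ∧ w y < w x) :
    ∃ x ∈ S, P x ∧ ∀ y ∈ S, f y ≤ f x := by
  obtain ⟨m, hm, hmax⟩ := S.exists_max_image f hS
  obtain ⟨x, hx, hxmin⟩ := (S.filter fun y => f m ≤ f y).exists_min_image w
    ⟨m, mem_filter.mpr ⟨hm, le_rfl⟩⟩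
  obtain ⟨hxS, hfx⟩ := mem_filter.mp hx
  refine ⟨x, hxS, by_contra fun hPx => ?_, fun y hy => (hmax y hy).trans hfx⟩
  obtain ⟨y, hyS, hfy, hwy⟩ := h x hxS hPx
  exact (hxmin y (mem_filter.mpr ⟨hyS, hfx.trans hfy⟩)).not_gt hwy

theorem exists_shifted_maximizer (n r s e : ℕ) (he : e ≤ n.choose r) :
    ∃ H : Finset (Finset ℕ), H ⊆ (Finset.range n).powersetCard r ∧ H.card = e ∧
      (∀ i j : ℕ, j < i → i < n → shiftSet i j H = H) ∧
      ∀ G : Finset (Finset ℕ), G ⊆ (Finset.range n).powersetCard r → G.card = e →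
        indepCount n s G ≤ indepCount n s H := by
  set 𝒢 := ((range n).powersetCard r).powerset.filter (·.card = e)
  have mem_𝒢 {H : Finset (Finset ℕ)} : H ∈ 𝒢 ↔ H ⊆ (range n).powersetCard r ∧ H.card = e := by
    rw [mem_filter, mem_powerset]
  have h𝒢 : 𝒢.Nonempty := by
    obtain ⟨H, hH, hcard⟩ := exists_subset_card_eq (s := (range n).powersetCard r) (n := e)
      (by rwa [card_powersetCard, card_range])
    exact ⟨H, mem_𝒢.mpr ⟨hH, hcard⟩⟩
  obtain ⟨H, hH, hshifted, hmax⟩ := exists_max_image_of_descent h𝒢 (indepCount n s) totalWeight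
    (P := fun H => ∀ i j : ℕ, j < i → i < n → shiftSet i j H = H) <| by
      intro H hH hnot
      push Not at hnot
      obtain ⟨i, j, hji, hin, hne⟩ := hnot
      obtain ⟨hHsub, hHcard⟩ := mem_𝒢.mp hH
      refine ⟨shiftSet i j H, mem_𝒢.mpr ⟨?_, card_shiftSet.trans hHcard⟩,
        indepCount_le_indepCount_shiftSet hin, totalWeight_shiftSet_lt hji hne⟩
      exact shiftSet_subset hHsub fun E hE =>
        shiftEdge_mem_powersetCard (mem_range.mpr (hji.trans hin)) hE
  obtain ⟨hHsub, hHcard⟩ := mem_𝒢.mp hH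
  exact ⟨H, hHsub, hHcard, hshifted, fun G hG hGe => hmax G (mem_𝒢.mpr ⟨hG, hGe⟩)⟩
end

section
/- Let $\mathcal{H}$ and $\mathcal{H}' = \mathcal{H} + E$ be shifted $r$-graphs (differing in the single edge $E$), and let $I \subseteq [n]$ with $|I| \ge s$. Then $I$ is $s$-independent in $\mathcal{H}$ but not in $\mathcal{H}'$ if and only if $E_0(I) = E$. -/
/-- The set of the `s` smallest elements of `I`. -/
def sSmallest (s : ℕ) (I : Finset ℕ) : Finset ℕ := ((I.sort (· ≤ ·)).take s).toFinset

/-- The minimal edge `E₀(I)`: the `s` smallest elements of `I` together with the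
`r - s` smallest elements of `[n]` outside of them. -/
def minimalEdge (n r s : ℕ) (I : Finset ℕ) : Finset ℕ :=
  sSmallest s I ∪ sSmallest (r - s) (Finset.range n \ sSmallest s I)

open Finset

section sSmallest

variable {k : ℕ} {X : Finset ℕ}

lemma sSmallest_subset (k : ℕ) (X : Finset ℕ) : sSmallest k X ⊆ X := fun x hx => by
  simp only [sSmallest, List.mem_toFinset] at hx
  exact (mem_sort _).1 ((List.take_sublist _ _).mem hx)

lemma card_sSmallest (h : k ≤ #X) : #(sSmallest k X) = k := by
  have hnd : ((X.sort (· ≤ ·)).take k).Nodup := (List.take_sublist _ _).nodup (X.sort_nodup _)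
  rw [sSmallest, List.card_toFinset, hnd.dedup, List.length_take, length_sort]
  omega

lemma sSmallest_lt {a x : ℕ} (ha : a ∈ sSmallest k X) (hx : x ∈ X) (hxk : x ∉ sSmallest k X) :
    a < x := by
  set L := X.sort (· ≤ ·)
  have ha' : a ∈ L.take k := by simpa [sSmallest] using ha
  have hx' : x ∉ L.take k := by simpa [sSmallest] using hxk
  have hxL : x ∈ L.drop k := by
    have : x ∈ L.take k ++ L.drop k := by rw [List.take_append_drop]; exact (mem_sort _).2 hx
    exact (List.mem_append.1 this).resolve_left hx'
  have hsorted : (L.take k ++ L.drop k).Pairwise (· ≤ ·) := by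
    rw [List.take_append_drop]; exact X.pairwise_sort _
  exact lt_of_le_of_ne ((List.pairwise_append.1 hsorted).2.2 a ha' x hxL)
    (by rintro rfl; exact hx' ha')

/-- `sSmallest k X` is an initial segment of `X`. -/
lemma sSmallest_subset_filter_lt_or_filter_lt_subset (t : ℕ) :
    sSmallest k X ⊆ X.filter (· < t) ∨ X.filter (· < t) ⊆ sSmallest k X := by
  by_contra! h
  obtain ⟨⟨a, ha, hat⟩, ⟨x, hx, hxk⟩⟩ := And.intro (not_subset.1 h.1) (not_subset.1 h.2)
  rw [mem_filter] at hat hx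
  have := sSmallest_lt ha hx.1 hxk
  exact hat ⟨sSmallest_subset k X ha, by omega⟩

end sSmallest

def ShiftLE (F G : Finset ℕ) : Prop :=
  ∀ t, #(G.filter (· < t)) ≤ #(F.filter (· < t))

def IsShifted (n : ℕ) (H : Finset (Finset ℕ)) : Prop :=
  ∀ i j, j < i → i < n → shiftSet i j H = H

lemma IsShifted.insert_erase_mem {n : ℕ} {H : Finset (Finset ℕ)} (hH : IsShifted n H)
    {i j : ℕ} (hji : j < i) (hin : i < n) {G : Finset ℕ} (hG : G ∈ H) (hiG : i ∈ G)
    (hjG : j ∉ G) : insert j (G.erase i) ∈ H := by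
  have hsh : shiftEdge i j G = insert j (G.erase i) := if_pos ⟨hiG, hjG⟩
  rw [← hH i j hji hin, ← hsh]
  exact mem_union_left _ (mem_image_of_mem _ hG)

lemma ShiftLE.insert_erase {F G : Finset ℕ} (hle : ShiftLE F G) {i j : ℕ} (hiG : i ∈ G)
    (hjG : j ∉ G) (hjF : j ∈ F) (hGF : ∀ x ∈ G, x < i → x ∈ F) :
    ShiftLE F (insert j (G.erase i)) := by
  intro t
  rw [filter_insert, filter_erase]
  by_cases hjt : j < t
  · rw [if_pos hjt]
    by_cases hit : i < t
    · have hi : i ∈ G.filter (· < t) := mem_filter.2 ⟨hiG, hit⟩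
      rw [card_insert_of_notMem (fun h => hjG (mem_filter.1 (mem_of_mem_erase h)).1),
        card_erase_add_one hi]
      exact hle t
    · rw [erase_eq_of_notMem (fun h => hit (mem_filter.1 h).2 : i ∉ G.filter (· < t))]
      refine card_le_card (insert_subset (mem_filter.2 ⟨hjF, hjt⟩) fun x hx => ?_)
      rw [mem_filter] at hx ⊢
      exact ⟨hGF x hx.1 (by omega), hx.2⟩
  · rw [if_neg hjt]
    exact (card_le_card (erase_subset _ _)).trans (hle t)

lemma ShiftLE.exists_shift {F G : Finset ℕ} (hle : ShiftLE F G) (hcard : #F = #G) (hne : F ≠ G) :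
    ∃ i ∈ G, i ∉ F ∧ ∃ j ∈ F, j ∉ G ∧ j < i ∧ ShiftLE F (insert j (G.erase i)) := by
  have hGF : (G \ F).Nonempty := by
    rw [sdiff_nonempty]
    exact fun h => hne (eq_of_subset_of_card_le h hcard.le).symm
  set i := (G \ F).min' hGF
  obtain ⟨hiG, hiF⟩ := mem_sdiff.1 ((G \ F).min'_mem hGF)
  have hbelow : ∀ x ∈ G, x < i → x ∈ F := fun x hx hxi => by
    by_contra hxF
    exact absurd ((G \ F).min'_le x (mem_sdiff.2 ⟨hx, hxF⟩)) (not_le.2 hxi)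
  -- otherwise `F ∩ [0, i]` would lie in `G ∩ [0, i)`, too small for `ShiftLE F G` at `i + 1`
  obtain ⟨j, hjF, hjG, hji⟩ : ∃ j ∈ F, j ∉ G ∧ j < i := by
    by_contra! h
    have hsub : F.filter (· < i + 1) ⊆ G.filter (· < i) := fun x hx => by
      rw [mem_filter] at hx ⊢
      have hxi : x < i :=
        lt_of_le_of_ne (Nat.lt_add_one_iff.1 hx.2) (by rintro rfl; exact hiF hx.1)
      exact ⟨by_contra fun hxG => absurd (h x hx.1 hxG) (not_le.2 hxi), hxi⟩
    have hssub : G.filter (· < i) ⊂ G.filter (· < i + 1) :=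
      ssubset_of_subset_of_ne (monotone_filter_right _ fun x hx => by omega)
        fun h => by
          have hi : i ∈ G.filter (· < i + 1) := mem_filter.2 ⟨hiG, Nat.lt_succ_self i⟩
          rw [← h, mem_filter] at hi
          exact lt_irrefl i hi.2
    exact absurd (hle (i + 1)) (not_le.2 ((card_le_card hsub).trans_lt (card_lt_card hssub)))
  exact ⟨i, hiG, hiF, j, hjF, hjG, hji, hle.insert_erase hiG hjG hjF hbelow⟩

lemma IsShifted.mem_of_shiftLE {n : ℕ} {H : Finset (Finset ℕ)} (hH : IsShifted n H)
    {F G : Finset ℕ} (hG : G ∈ H) (hGn : G ⊆ range n) (hcard : #F = #G) (hle : ShiftLE F G) :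
    F ∈ H := by
  induction hd : #(G \ F) generalizing G with
  | zero =>
    rw [card_eq_zero, sdiff_eq_empty_iff_subset] at hd
    rwa [← eq_of_subset_of_card_le hd hcard.le]
  | succ d ih =>
    have hne : F ≠ G := by rintro rfl; simp at hd
    obtain ⟨i, hiG, hiF, j, hjF, hjG, hji, hle'⟩ := hle.exists_shift hcard hne
    have hin : i < n := mem_range.1 (hGn hiG)
    refine ih (hH.insert_erase_mem hji hin hG hiG hjG) ?_ ?_ hle' ?_
    · exact insert_subset (mem_range.2 (hji.trans hin)) ((erase_subset _ _).trans hGn)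
    · rw [card_insert_of_notMem (fun h => hjG (mem_of_mem_erase h)), card_erase_add_one hiG,
        hcard]
    · rw [insert_sdiff_of_mem _ hjF, erase_sdiff_comm,
        card_erase_of_mem (mem_sdiff.2 ⟨hiG, hiF⟩), hd]
      rfl

section minimalEdge

variable {n r s : ℕ} {I : Finset ℕ}

lemma disjoint_sSmallest_sSmallest_sdiff (k : ℕ) :
    Disjoint (sSmallest s I) (sSmallest k (range n \ sSmallest s I)) :=
  disjoint_left.2 fun _ hx hx' => (mem_sdiff.1 (sSmallest_subset _ _ hx')).2 hx

lemma card_sSmallest_sdiff (hrn : r ≤ n) (hI : I ⊆ range n) (hIs : s ≤ #I) :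
    #(sSmallest (r - s) (range n \ sSmallest s I)) = r - s := by
  refine card_sSmallest ?_
  rw [card_sdiff_of_subset ((sSmallest_subset s I).trans hI), card_range, card_sSmallest hIs]
  omega

lemma card_minimalEdge (hrn : r ≤ n) (hsr : s ≤ r) (hI : I ⊆ range n) (hIs : s ≤ #I) :
    #(minimalEdge n r s I) = r := by
  rw [minimalEdge, card_union_of_disjoint (disjoint_sSmallest_sSmallest_sdiff _),
    card_sSmallest hIs, card_sSmallest_sdiff hrn hI hIs]
  omega

lemma le_card_inter_minimalEdge (hIs : s ≤ #I) : s ≤ #(I ∩ minimalEdge n r s I) :=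
  calc s = #(sSmallest s I) := (card_sSmallest hIs).symm
    _ ≤ _ := card_le_card (subset_inter (sSmallest_subset s I) subset_union_left)

lemma shiftLE_minimalEdge (hsr : s ≤ r) (hI : I ⊆ range n) (hIs : s ≤ #I) {G : Finset ℕ}
    (hGn : G ⊆ range n) (hGr : #G = r) (hGI : s ≤ #(I ∩ G)) :
    ShiftLE (minimalEdge n r s I) G := by
  intro t
  have hrn : r ≤ n := by simpa [hGr] using card_le_card hGn
  rcases sSmallest_subset_filter_lt_or_filter_lt_subset (k := r - s)
    (X := range n \ sSmallest s I) t with hB | hB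
  · have hBt : (sSmallest (r - s) (range n \ sSmallest s I)).filter (· < t) =
        sSmallest (r - s) (range n \ sSmallest s I) :=
      filter_true_of_mem fun b hb => (mem_filter.1 (hB hb)).2
    rcases sSmallest_subset_filter_lt_or_filter_lt_subset (k := s) (X := I) t with hA | hA
    · have hAt : (sSmallest s I).filter (· < t) = sSmallest s I :=
        filter_true_of_mem fun a ha => (mem_filter.1 (hA ha)).2
      rw [minimalEdge, filter_union, hAt, hBt, ← minimalEdge, card_minimalEdge hrn hsr hI hIs,
        ← hGr]
      exact card_le_card (filter_subset _ _)
    · -- `I ∩ [0, t) ⊆ sSmallest s I`, so at least `s - #(sSmallest s I ∩ [0, t))` points of `G`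
      -- lie at or beyond `t`
      have hIG : #((I ∩ G).filter (· < t)) ≤ #((sSmallest s I).filter (· < t)) :=
        card_le_card fun x hx => by
          rw [mem_filter, mem_inter] at hx
          exact mem_filter.2 ⟨hA (mem_filter.2 ⟨hx.1.1, hx.2⟩), hx.2⟩
      have hsplitIG := card_filter_add_card_filter_not (s := I ∩ G) (· < t)
      have hsplitG := card_filter_add_card_filter_not (s := G) (· < t)
      have hbeyond : #((I ∩ G).filter (¬ · < t)) ≤ #(G.filter (¬ · < t)) :=
        card_le_card (filter_subset_filter _ inter_subset_right)
      rw [minimalEdge, filter_union, hBt,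
        card_union_of_disjoint
          ((disjoint_sSmallest_sSmallest_sdiff _).mono_left (filter_subset _ _)),
        card_sSmallest_sdiff hrn hI hIs]
      omega
  · refine card_le_card fun x hx => ?_
    rw [mem_filter] at hx ⊢
    refine ⟨?_, hx.2⟩
    by_cases hxA : x ∈ sSmallest s I
    · exact mem_union_left _ hxA
    · exact mem_union_right _ (hB (mem_filter.2 ⟨mem_sdiff.2 ⟨hGn hx.1, hxA⟩, hx.2⟩))

end minimalEdge

lemma IsShifted.minimalEdge_mem_iff {n r s : ℕ} {H : Finset (Finset ℕ)} (hH : IsShifted n H)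
    (hunif : ∀ F ∈ H, F ⊆ range n ∧ #F = r) (hsr : s ≤ r) {I : Finset ℕ} (hI : I ⊆ range n)
    (hIs : s ≤ #I) : minimalEdge n r s I ∈ H ↔ ∃ F ∈ H, s ≤ #(I ∩ F) := by
  refine ⟨fun h => ⟨_, h, le_card_inter_minimalEdge hIs⟩, fun ⟨F, hF, hsF⟩ => ?_⟩
  obtain ⟨hFn, hFr⟩ := hunif F hF
  have hrn : r ≤ n := by simpa [hFr] using card_le_card hFn
  refine hH.mem_of_shiftLE hF hFn ?_ (shiftLE_minimalEdge hsr hI hIs hFn hFr hsF)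
  rw [card_minimalEdge hrn hsr hI hIs, hFr]

theorem lost_indep_sets_iff_minimalEdge_general (n r s : ℕ) (hsr : s ≤ r)
    (H : Finset (Finset ℕ)) (E : Finset ℕ) (hEH : E ∉ H)
    (hunif : ∀ F ∈ insert E H, F ⊆ Finset.range n ∧ F.card = r)
    (hshH : ∀ i j : ℕ, j < i → i < n → shiftSet i j H = H)
    (hshH' : ∀ i j : ℕ, j < i → i < n → shiftSet i j (insert E H) = insert E H)
    (I : Finset ℕ) (hI : I ⊆ Finset.range n) (hIs : s ≤ I.card) :
    ((∀ F ∈ H, (I ∩ F).card < s) ∧ ¬ (∀ F ∈ insert E H, (I ∩ F).card < s)) ↔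
      minimalEdge n r s I = E := by
  have hindep : ∀ {K}, IsShifted n K → (∀ F ∈ K, F ⊆ range n ∧ #F = r) →
      ((∀ F ∈ K, #(I ∩ F) < s) ↔ minimalEdge n r s I ∉ K) := fun hK hunifK => by
    simp_rw [hK.minimalEdge_mem_iff hunifK hsr hI hIs, not_exists, not_and, not_le]
  rw [hindep hshH fun F hF => hunif F (mem_insert_of_mem hF), hindep hshH' hunif, not_not,
    mem_insert]
  exact ⟨fun h => h.2.resolve_right h.1, fun h => ⟨h ▸ hEH, .inl h⟩⟩

theorem lost_indep_sets_iff_minimalEdge (n r s : ℕ) (hs2 : 2 ≤ s) (hsr : s ≤ r)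
    (H : Finset (Finset ℕ)) (E : Finset ℕ) (hEH : E ∉ H)
    (hunif : ∀ F ∈ insert E H, F ⊆ Finset.range n ∧ F.card = r)
    (hshH : ∀ i j : ℕ, j < i → i < n → shiftSet i j H = H)
    (hshH' : ∀ i j : ℕ, j < i → i < n → shiftSet i j (insert E H) = insert E H)
    (I : Finset ℕ) (hI : I ⊆ Finset.range n) (hIs : s ≤ I.card) :
    ((∀ F ∈ H, (I ∩ F).card < s) ∧ ¬ (∀ F ∈ insert E H, (I ∩ F).card < s)) ↔
      minimalEdge n r s I = E :=
  lost_indep_sets_iff_minimalEdge_general n r s hsr H E hEH hunif hshH hshH' I hI hIs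
end
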